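/- arXiv:1705.07701 — 2 statements merged into one kernel-verified Lean document; each statement's English description precedes it below -/
import Mathlib

section
/- Let 𝔽 ⊆ ℂ be a number field and L ⊆ ℂ a number field containing the Galois closure 𝔽^Gal of 𝔽/ℚ. Let x, y : Aut(ℂ) → ℂ be families with y(σ) ≠ 0 for all σ, such that x(σ) and y(σ) depend only on the restriction σ|_L, and such that σ(x(τ)/y(τ)) = x(στ)/y(στ) for all σ ∈ Aut(ℂ/𝔽) and all τ ∈ Aut(ℂ). Then for every σ₀ ∈ Aut(ℂ) one has x(σ₀)/y(σ₀) ∈ σ₀(L). -/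
/-!
Put `w = σ₀⁻¹ (x σ₀ / y σ₀)`. For `π ∈ Aut(ℂ/L)` the conjugate `σ₀ π σ₀⁻¹` fixes `𝔽`, because
`σ₀⁻¹ 𝔽 ⊆ L`, and `σ₀ π` agrees with `σ₀` on `L`; equivariance therefore gives `π w = w`.
So `w` lies in the fixed field of `Aut(ℂ/L)`, which is `L` itself: an element outside `L` is
moved by an `L`-automorphism of its algebraic closure in `ℂ` if it is algebraic over `L`
(that closure is Galois over `L` in characteristic zero), and by the translation of a
transcendence-basis variable if it is transcendental. Both extend to automorphisms of `ℂ`,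
since `ℂ` is an algebraic closure of the polynomial ring on any transcendence basis.
-/

open MvPolynomial

namespace MvPolynomial

variable (R : Type*) [CommRing R] {ι : Type*} [DecidableEq ι]

noncomputable def translateVar (i₀ : ι) : MvPolynomial ι R ≃ₐ[R] MvPolynomial ι R :=
  AlgEquiv.ofAlgHom
    (aeval fun i => if i = i₀ then X i₀ + 1 else X i)
    (aeval fun i => if i = i₀ then X i₀ - 1 else X i)
    (algHom_ext fun j => by by_cases hj : j = i₀ <;> simp [hj])
    (algHom_ext fun j => by by_cases hj : j = i₀ <;> simp [hj])

@[simp]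
theorem translateVar_X_self (i₀ : ι) : translateVar R i₀ (X i₀) = X i₀ + 1 := by
  simp [translateVar]

end MvPolynomial

variable {Ω : Type*} [Field Ω] [IsAlgClosed Ω]

theorem IsTranscendenceBasis.exists_ringEquiv_aeval {F ι : Type*} [Field F] [Algebra F Ω]
    {v : ι → Ω} (hv : IsTranscendenceBasis F v) (ψ : MvPolynomial ι F ≃+* MvPolynomial ι F) :
    ∃ σ : Ω ≃+* Ω, ∀ p, σ (aeval v p) = aeval v (ψ p) := by
  have := IsAlgClosed.isAlgClosure_of_transcendence_basis v hv
  refine ⟨IsAlgClosure.equivOfEquiv Ω Ω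
    ((hv.1.aevalEquiv.symm.toRingEquiv.trans ψ).trans hv.1.aevalEquiv.toRingEquiv), fun p => ?_⟩
  rw [← hv.1.algebraMap_aevalEquiv, IsAlgClosure.equivOfEquiv_algebraMap,
    ← hv.1.algebraMap_aevalEquiv]
  simp

namespace IsAlgClosed

theorem exists_ringEquiv_extend (E : Type*) [Field E] [Algebra E Ω] (τ : E ≃+* E) :
    ∃ σ : Ω ≃+* Ω, ∀ e, σ (algebraMap E Ω e) = algebraMap E Ω (τ e) := by
  obtain ⟨s, hs⟩ := exists_isTranscendenceBasis E Ω
  obtain ⟨σ, hσ⟩ := hs.exists_ringEquiv_aeval (mapEquiv s τ)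
  exact ⟨σ, fun e => by simpa using hσ (C e)⟩

theorem exists_algEquiv_apply_ne_of_transcendental {K : Type*} [Field K] [Algebra K Ω] {w : Ω}
    (hw : Transcendental K w) : ∃ σ : Ω ≃ₐ[K] Ω, σ w ≠ w := by
  classical
  obtain ⟨s, hws, hs⟩ := exists_isTranscendenceBasis_superset
    (algebraicIndependent_unique_type_iff.mpr hw : AlgebraicIndepOn K id {w})
  let i : s := ⟨w, hws rfl⟩
  let ψ := translateVar K i
  obtain ⟨σ, hσ⟩ := hs.exists_ringEquiv_aeval ψ.toRingEquiv
  refine ⟨AlgEquiv.ofRingEquiv (f := σ) fun k => by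
    simpa only [AlgHom.commutes, AlgEquiv.coe_ringEquiv,
      AlgEquiv.commutes] using hσ (algebraMap K _ k), ?_⟩
  have : σ w = w + 1 := by simpa [ψ, i] using hσ (X i)
  simp [this]

theorem exists_algEquiv_apply_ne_of_isAlgebraic {K : Type*} [Field K] [PerfectField K]
    [Algebra K Ω] {w : Ω} (halg : IsAlgebraic K w) (hw : w ∉ Set.range (algebraMap K Ω)) :
    ∃ σ : Ω ≃ₐ[K] Ω, σ w ≠ w := by
  let E := algebraicClosure K Ω
  let w' : E := ⟨w, mem_algebraicClosure_iff.2 halg⟩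
  obtain ⟨τ, hτ⟩ : ∃ τ : Gal(E/K), τ w' ≠ w' := by
    by_contra! h
    obtain ⟨k, hk⟩ := (InfiniteGalois.mem_range_algebraMap_iff_fixed w').2 h
    exact hw ⟨k, congrArg Subtype.val hk⟩
  obtain ⟨σ, hσ⟩ := exists_ringEquiv_extend (Ω := Ω) E τ.toRingEquiv
  refine ⟨AlgEquiv.ofRingEquiv (f := σ) fun k => ?_, fun h => hτ (Subtype.ext ?_)⟩
  · simpa using hσ (algebraMap K E k)
  · exact (hσ w').symm.trans h

theorem mem_range_algebraMap_iff_fixed {K : Type*} [Field K] [PerfectField K]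
    [Algebra K Ω] (w : Ω) : w ∈ Set.range (algebraMap K Ω) ↔ ∀ σ : Ω ≃ₐ[K] Ω, σ w = w := by
  refine ⟨fun ⟨k, hk⟩ σ => hk ▸ σ.commutes k, fun h => ?_⟩
  by_contra hw
  obtain ⟨σ, hσ⟩ : ∃ σ : Ω ≃ₐ[K] Ω, σ w ≠ w := by
    by_cases halg : IsAlgebraic K w
    · exact exists_algEquiv_apply_ne_of_isAlgebraic halg hw
    · exact exists_algEquiv_apply_ne_of_transcendental halg
  exact hσ (h σ)

end IsAlgClosed

theorem minimizing_lemma_general (𝔽 L : Subfield ℂ)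
    (hGal : ∀ (σ : ℂ ≃+* ℂ), ∀ z ∈ 𝔽, σ z ∈ L)
    (x y : (ℂ ≃+* ℂ) → ℂ)
    (hdep : ∀ σ τ : ℂ ≃+* ℂ, (∀ z ∈ L, σ z = τ z) → x σ = x τ ∧ y σ = y τ)
    (hequiv : ∀ σ τ : ℂ ≃+* ℂ, (∀ z ∈ 𝔽, σ z = z) →
      σ (x τ / y τ) = x (τ.trans σ) / y (τ.trans σ)) :
    ∀ σ₀ : ℂ ≃+* ℂ, x σ₀ / y σ₀ ∈ L.map (σ₀ : ℂ →+* ℂ) := by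
  intro σ₀
  set r := x σ₀ / y σ₀
  suffices hw : σ₀.symm r ∈ L from ⟨_, hw, σ₀.apply_symm_apply r⟩
  obtain ⟨l, hl⟩ := (IsAlgClosed.mem_range_algebraMap_iff_fixed (K := L) (σ₀.symm r)).2 fun π => by
    have hπ : ∀ z ∈ L, π z = z := fun z hz => π.commutes ⟨z, hz⟩
    let σ : ℂ ≃+* ℂ := σ₀.symm.trans (π.toRingEquiv.trans σ₀)
    have hσ𝔽 : ∀ z ∈ 𝔽, σ z = z := fun z hz => by simp [σ, hπ _ (hGal σ₀.symm z hz)]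
    have hσL : ∀ z ∈ L, (σ₀.trans σ) z = σ₀ z := fun z hz => by simp [σ, hπ z hz]
    obtain ⟨hx, hy⟩ := hdep _ _ hσL
    have hr : σ r = r := by rw [hequiv σ σ₀ hσ𝔽, hx, hy]
    simpa [σ] using congrArg σ₀.symm hr
  exact hl ▸ l.2

/-- The Minimizing Lemma: let `𝔽 ⊆ ℂ` be a number field, `L ⊆ ℂ` a number field
containing the Galois closure of `𝔽/ℚ` (so `𝔽 ≤ L` and `L` is stable under taking
conjugates of elements of `𝔽`, i.e. `σ(𝔽) ⊆ L` for all automorphisms `σ` of `ℂ`).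
Let `x, y : Aut(ℂ) → ℂ` be families with `y σ ≠ 0` for all `σ`, depending only on
the restriction of `σ` to `L`, and satisfying the Galois-equivariance
`σ(x τ / y τ) = x (σ∘τ) / y (σ∘τ)` for all `σ ∈ Aut(ℂ/𝔽)`, `τ ∈ Aut(ℂ)`.
Then `x σ₀ / y σ₀ ∈ σ₀(L)` for every `σ₀ ∈ Aut(ℂ)`. -/
theorem minimizing_lemma (𝔽 L : Subfield ℂ)
    (h𝔽num : FiniteDimensional ℚ 𝔽) (hLnum : FiniteDimensional ℚ L)
    (h𝔽L : 𝔽 ≤ L)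
    (hGal : ∀ (σ : ℂ ≃+* ℂ), ∀ z ∈ 𝔽, σ z ∈ L)
    (x y : (ℂ ≃+* ℂ) → ℂ) (hy : ∀ σ, y σ ≠ 0)
    (hdep : ∀ σ τ : ℂ ≃+* ℂ, (∀ z ∈ L, σ z = τ z) → x σ = x τ ∧ y σ = y τ)
    (hequiv : ∀ σ τ : ℂ ≃+* ℂ, (∀ z ∈ 𝔽, σ z = z) →
      σ (x τ / y τ) = x (τ.trans σ) / y (τ.trans σ)) :
    ∀ σ₀ : ℂ ≃+* ℂ, x σ₀ / y σ₀ ∈ L.map (σ₀ : ℂ →+* ℂ) :=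
  minimizing_lemma_general 𝔽 L hGal x y hdep hequiv
end

section
/- Let m ≥ 1 and n = lm with n odd (so l and m are odd). Let t : ℤ → ℂ^× be m-periodic (t_{i+m} = t_i for all i), and let X be an indeterminate. Then ∏_{k=1}^{(n−1)/2} ∏_{i=1}^{m} (1 − t_i t_{i+k}^{−1} X)(1 − t_i^{−1} t_{i+k} X) · (1 − X)^m = ∏_{i=1}^{m} ∏_{j=1}^{m} (1 − t_i t_j^{−1} X)^l. -/
/-!
Put `g d = ∏_{i=1}^m (1 - t_i t_{i+d}⁻¹ X)`, an `m`-periodic function of `d`. Reindexing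
`i ↦ i + k` shows that the `k`-th factor on the left is `g k · g (-k)`, and `(1 - X)^m = g 0`, so
the left side is `∏_{d=-K}^{K} g d` with `2K + 1 = n = l m`. Over `l m` consecutive integers an
`m`-periodic product is the `l`-th power of the product over one period, and `∏_{d=1}^m g d` is
the double product on the right after substituting `j = i + d`.
-/

open Finset Polynomial

theorem Int.prod_Icc_eq_prod_range {M : Type*} [CommMonoid M] (f : ℤ → M) (a b : ℤ) :
    ∏ i ∈ Icc a b, f i = ∏ k ∈ Finset.range (b + 1 - a).toNat, f (a + k) := by
  rw [Int.Icc_eq_finset_map, prod_map]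
  rfl

namespace Function.Periodic

variable {M : Type*} [CommMonoid M] {F : ℤ → M} {m : ℕ}

theorem prod_range_add_one (hF : Periodic F m) (a : ℤ) :
    ∏ k ∈ range m, F (a + 1 + k) = ∏ k ∈ range m, F (a + k) := by
  cases m with
  | zero => simp
  | succ m =>
    rw [prod_range_succ, prod_range_succ', Nat.cast_zero, add_zero]
    congr 1
    · exact prod_congr rfl fun k _ => by push_cast; ring_nf
    · rw [← hF a]; push_cast; ring_nf

theorem prod_range_add_eq (hF : Periodic F m) (a b : ℤ) :
    ∏ k ∈ range m, F (a + k) = ∏ k ∈ range m, F (b + k) := by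
  suffices h : ∀ a : ℤ, ∏ k ∈ range m, F (a + k) = ∏ k ∈ range m, F k by rw [h, h]
  intro a
  induction a using Int.induction_on with
  | zero => simp
  | succ a ih => rw [hF.prod_range_add_one, ih]
  | pred a ih => rw [← ih, ← hF.prod_range_add_one, sub_add_cancel]

theorem prod_range_mul (hF : Periodic F m) (a : ℤ) (l : ℕ) :
    ∏ k ∈ range (l * m), F (a + k) = (∏ k ∈ range m, F (a + k)) ^ l := by
  induction l with
  | zero => simp
  | succ l ih =>
    rw [add_one_mul, prod_range_add, ih, pow_succ]
    congr 1
    refine prod_congr rfl fun k _ => ?_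
    rw [Nat.cast_add, Nat.cast_mul, ← add_assoc, add_right_comm, hF.nat_mul l]

theorem prod_Icc_eq_pow (hF : Periodic F m) {a b c d : ℤ} {l : ℕ} (hab : b + 1 - a = l * m)
    (hcd : d + 1 - c = m) : ∏ i ∈ Icc a b, F i = (∏ i ∈ Icc c d, F i) ^ l := by
  simp only [Int.prod_Icc_eq_prod_range, hab, hcd, ← Nat.cast_mul, Int.toNat_natCast]
  rw [hF.prod_range_mul, hF.prod_range_add_eq a c]

theorem prod_Icc_comp_add (hF : Periodic F m) {a b : ℤ} (hab : b + 1 - a = m) (c : ℤ) :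
    ∏ i ∈ Icc a b, F (i + c) = ∏ i ∈ Icc a b, F i := by
  simp only [Int.prod_Icc_eq_prod_range, hab, Int.toNat_natCast]
  simpa only [add_right_comm] using hF.prod_range_add_eq (a + c) a

end Function.Periodic

theorem Finset.prod_Icc_neg_self {M : Type*} [CommMonoid M] (f : ℤ → M) (K : ℕ) :
    ∏ i ∈ Icc (-K : ℤ) K, f i = (∏ k ∈ Icc 1 K, f k * f (-k)) * f 0 := by
  induction K with
  | zero => simp
  | succ K ih =>
    rw [Nat.cast_succ, Icc_succ_succ, prod_union (by simp), prod_pair (by omega), ih,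
      prod_Icc_succ_top (by omega), Nat.cast_succ]
    ac_rfl

theorem Finset.prod_Icc_prod_Icc_add_of_periodic {M : Type*} [CommMonoid M] {T : ℤ → ℤ → M}
    {m : ℕ} (hT : ∀ i, Function.Periodic (T i) m) {a b : ℤ} (hab : b + 1 - a = m) :
    ∏ d ∈ Icc a b, ∏ i ∈ Icc a b, T i (i + d) = ∏ i ∈ Icc a b, ∏ j ∈ Icc a b, T i j := by
  rw [prod_comm]
  exact prod_congr rfl fun i _ => by simpa only [add_comm] using (hT i).prod_Icc_comp_add hab i

theorem split_place_asai_isobaric_identity_general (l m n : ℕ)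
    (hn : n = l * m) (hodd : Odd n) (t : ℤ → ℂ)
    (ht0 : ∀ i, t i ≠ 0) (hper : ∀ i : ℤ, t (i + (m : ℤ)) = t i) :
    (∏ k ∈ Finset.Icc 1 ((n - 1) / 2), ∏ i ∈ Finset.Icc (1 : ℤ) (m : ℤ),
        ((1 - Polynomial.C (t i * (t (i + (k : ℤ)))⁻¹) * Polynomial.X) *
          (1 - Polynomial.C ((t i)⁻¹ * t (i + (k : ℤ))) * Polynomial.X))) *
      (1 - Polynomial.X) ^ m =
    ∏ i ∈ Finset.Icc (1 : ℤ) (m : ℤ), ∏ j ∈ Finset.Icc (1 : ℤ) (m : ℤ),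
      (1 - Polynomial.C (t i * (t j)⁻¹) * Polynomial.X) ^ l := by
  set T : ℤ → ℤ → ℂ[X] := fun i j ↦ 1 - C (t i * (t j)⁻¹) * X
  set g : ℤ → ℂ[X] := fun d ↦ ∏ i ∈ Icc (1 : ℤ) m, T i (i + d)
  have hm : (m : ℤ) + 1 - 1 = m := by ring
  have hT : ∀ i, Function.Periodic (T i) m := fun i j ↦ by simp only [T, hper]
  have hg : Function.Periodic g m := fun d ↦ by simp only [g, T, ← add_assoc, hper]
  have hg_neg (k : ℤ) : ∏ i ∈ Icc (1 : ℤ) m, (1 - C ((t i)⁻¹ * t (i + k)) * X) = g (-k) := by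
    have hshift := Function.Periodic.prod_Icc_comp_add (F := fun i ↦ T i (i + -k))
      (fun i ↦ by simp only [T, add_right_comm i (m : ℤ), hper]) hm k
    simpa only [T, add_neg_cancel_right, mul_comm (t _)⁻¹] using hshift
  have hg_zero : g 0 = (1 - X) ^ m := by
    simp only [g, T, add_zero, mul_inv_cancel₀ (ht0 _), map_one, one_mul, prod_const,
      Int.card_Icc, hm, Int.toNat_natCast]
  obtain ⟨K, hK⟩ := hodd
  calc _ = ∏ i ∈ Icc (-K : ℤ) K, g i := by
        rw [prod_Icc_neg_self, ← hg_zero, hK, Nat.add_sub_cancel,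
          Nat.mul_div_cancel_left _ two_pos]
        simp only [prod_mul_distrib, hg_neg, g, T]
    _ = (∏ d ∈ Icc (1 : ℤ) m, g d) ^ l :=
        hg.prod_Icc_eq_pow (by rw [← Nat.cast_mul, ← hn, hK]; push_cast; ring) hm
    _ = _ := by
        rw [prod_Icc_prod_Icc_add_of_periodic hT hm]
        simp only [prod_pow, T]

/-- Euler factor identity at a split place for the Asai L-function of an
automorphically induced representation, `n = l·m` odd: for an `m`-periodic family
of nonzero complex numbers `t`,
`∏_{k=1}^{(n−1)/2} ∏_{i=1}^{m} (1 − t_i t_{i+k}^{−1} X)(1 − t_i^{−1} t_{i+k} X) · (1 − X)^m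
  = ∏_{i=1}^{m} ∏_{j=1}^{m} (1 − t_i t_j^{−1} X)^l` in `ℂ[X]`. -/
theorem split_place_asai_isobaric_identity (l m n : ℕ) (hm : 1 ≤ m)
    (hn : n = l * m) (hodd : Odd n) (t : ℤ → ℂ)
    (ht0 : ∀ i, t i ≠ 0) (hper : ∀ i : ℤ, t (i + (m : ℤ)) = t i) :
    (∏ k ∈ Finset.Icc 1 ((n - 1) / 2), ∏ i ∈ Finset.Icc (1 : ℤ) (m : ℤ),
        ((1 - Polynomial.C (t i * (t (i + (k : ℤ)))⁻¹) * Polynomial.X) *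
          (1 - Polynomial.C ((t i)⁻¹ * t (i + (k : ℤ))) * Polynomial.X))) *
      (1 - Polynomial.X) ^ m =
    ∏ i ∈ Finset.Icc (1 : ℤ) (m : ℤ), ∏ j ∈ Finset.Icc (1 : ℤ) (m : ℤ),
      (1 - Polynomial.C (t i * (t j)⁻¹) * Polynomial.X) ^ l :=
  split_place_asai_isobaric_identity_general l m n hn hodd t ht0 hper
end
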